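/- arXiv:1910.06843 — 2 statements merged into one kernel-verified Lean document; each statement's English description precedes it below -/
import Mathlib

section
/- Let a, b, c, d be nonnegative integers and κ, λ ⊆ □_{a+c,b+d} partitions with ℓ(κ) ≤ a and λ_1 ≤ b. If |κ| + |λ| > ad + ab + cb, then σ_κ · σ_λ = 0 in the cohomology ring of the Grassmannian G(a+c, b+d). -/
/-- A partition: a weakly decreasing sequence of natural numbers with finitely many nonzero
terms, recorded as a function `ℕ → ℕ` giving the (0-indexed) parts.  Partitions differing
only in trailing zeros are identified. -/
structure Partition' where
  f : ℕ → ℕ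
  antitone : Antitone f
  eventually_zero : ∃ N, ∀ n, N ≤ n → f n = 0

namespace Partition'

/-- The empty partition `∅`. -/
def empty : Partition' := ⟨fun _ => 0, fun _ _ _ => le_rfl, 0, fun _ _ => rfl⟩

/-- Entrywise sum `μ + ν` of partitions: `(μ + ν)_k = μ_k + ν_k`. -/
noncomputable instance : Add Partition' :=
  ⟨fun p q =>
    ⟨fun i => p.f i + q.f i, fun _ _ h => Nat.add_le_add (p.antitone h) (q.antitone h), by
      obtain ⟨N, hN⟩ := p.eventually_zero
      obtain ⟨M, hM⟩ := q.eventually_zero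
      refine ⟨max N M, fun n hn => ?_⟩
      show p.f n + q.f n = 0
      rw [hN n (le_trans (le_max_left _ _) hn), hM n (le_trans (le_max_right _ _) hn)]⟩⟩

/-- The size `|λ|` of a partition: the sum of its parts. -/
noncomputable def size (p : Partition') : ℕ := ∑' i, p.f i

/-- The partial sum `|λ|_k = λ_1 + ⋯ + λ_k`. -/
def psum (p : Partition') (k : ℕ) : ℕ := ∑ i ∈ Finset.range k, p.f i

/-- The length `ℓ(λ)`: the number of nonzero parts. -/
noncomputable def len (p : Partition') : ℕ := sInf {N | p.f N = 0}

lemma support_finite (p : Partition') (j : ℕ) : {i | j + 1 ≤ p.f i}.Finite := by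
  obtain ⟨N, hN⟩ := p.eventually_zero
  refine (Set.finite_Iio N).subset fun i hi => ?_
  simp only [Set.mem_setOf_eq] at hi
  simp only [Set.mem_Iio]
  by_contra h
  push_neg at h
  rw [hN i h] at hi
  omega

/-- The conjugate partition `λ'`: `λ'_j = #{i : λ_i ≥ j}` (transpose of the Young diagram). -/
noncomputable def conj (p : Partition') : Partition' where
  f := fun j => {i | j + 1 ≤ p.f i}.ncard
  antitone := by
    intro j j' h
    exact Set.ncard_le_ncard (fun i hi => le_trans (by omega : j + 1 ≤ j' + 1) hi)
      (p.support_finite j)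
  eventually_zero := by
    refine ⟨p.f 0, fun n hn => ?_⟩
    show {i | n + 1 ≤ p.f i}.ncard = 0
    have : {i | n + 1 ≤ p.f i} = ∅ := by
      ext i
      simp only [Set.mem_setOf_eq, Set.mem_empty_iff_false, iff_false]
      have := p.antitone (Nat.zero_le i)
      omega
    rw [this, Set.ncard_empty]

/-- The rectangular partition `□_{a,b}` with `a` parts each equal to `b`. -/
def rect (a b : ℕ) : Partition' where
  f := fun i => if i < a then b else 0
  antitone := by
    intro i j hij
    dsimp only
    split_ifs <;> omega
  eventually_zero := ⟨a, fun n hn => by simp [Nat.not_lt_of_le hn]⟩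

/-- The concatenation `(□_{a,d} + μ, α)`: the first `a` parts are `d + μ_k`, followed by
the parts of `α` (requiring `α_1 ≤ d`). -/
def rectConcat (a d : ℕ) (μ α : Partition') (hα : α.f 0 ≤ d) : Partition' where
  f := fun i => if i < a then d + μ.f i else α.f (i - a)
  antitone := by
    intro x y hxy
    dsimp only
    split_ifs with hy hx hx
    · exact Nat.add_le_add_left (μ.antitone hxy) d
    · exact absurd hy (by omega)
    · exact le_trans (le_trans (α.antitone (Nat.zero_le _)) hα) (Nat.le_add_right d _)
    · exact α.antitone (by omega)
  eventually_zero := by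
    obtain ⟨N, hN⟩ := α.eventually_zero
    refine ⟨a + N, fun n hn => ?_⟩
    show (if n < a then d + μ.f n else α.f (n - a)) = 0
    rw [if_neg (by omega)]
    exact hN _ (by omega)

/-- The partition `□_{a,d} + μ`, adding `d` to each of the first `a` parts of `μ`
(intended for `ℓ(μ) ≤ a`). -/
def rectAdd (a d : ℕ) (μ : Partition') : Partition' :=
  rectConcat a d μ empty (Nat.zero_le d)

/-- The complement `λ^∨` of `λ` inside the rectangle `□_{a,b}`:
`(λ^∨)_i = b - λ_{a+1-i}` (intended for `λ ⊆ □_{a,b}`). -/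
def compl (a b : ℕ) (p : Partition') : Partition' where
  f := fun i => if i < a then b - p.f (a - 1 - i) else 0
  antitone := by
    intro x y hxy
    dsimp only
    split_ifs with hy hx hx
    · exact Nat.sub_le_sub_left (p.antitone (by omega)) b
    · exact absurd hy (by omega)
    · exact Nat.zero_le _
    · exact le_rfl
  eventually_zero := ⟨a, fun n hn => by simp [Nat.not_lt_of_le hn]⟩

/-- The list of (nonzero) parts of a partition. -/
noncomputable def toList (p : Partition') : List ℕ := (List.range p.len).map p.f

/-- The partition `(μ, ν)`: the decreasing rearrangement of the concatenation of the
parts of `μ` and of `ν`. -/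
noncomputable def sortedConcat (p q : Partition') : Partition' where
  f := fun i => ((p.toList ++ q.toList).mergeSort (fun x y => decide (y ≤ x))).getD i 0
  antitone := by
    intro x y hxy
    dsimp only
    set L := (p.toList ++ q.toList).mergeSort (fun x y => decide (y ≤ x)) with hL
    have hs : List.Pairwise (fun a b : ℕ => b ≤ a) L := by
      have := List.pairwise_mergeSort (le := fun x y : ℕ => decide (y ≤ x))
        (fun a b c hab hbc => by simp at hab hbc ⊢; omega)
        (fun a b => by simp; omega) (p.toList ++ q.toList)
      simpa using this
    by_cases hy : y < L.length
    · have hx : x < L.length := lt_of_le_of_lt hxy hy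
      rcases eq_or_lt_of_le hxy with h | h
      · subst h; exact le_rfl
      · have := (List.pairwise_iff_get.mp hs) ⟨x, hx⟩ ⟨y, hy⟩ h
        rw [List.getD_eq_getElem L 0 hy, List.getD_eq_getElem L 0 hx]
        simpa [List.get] using this
    · rw [List.getD_eq_default L 0 (by omega)]
      exact Nat.zero_le _
  eventually_zero :=
    ⟨((p.toList ++ q.toList).mergeSort (fun x y => decide (y ≤ x))).length,
      fun n hn => List.getD_eq_default _ 0 hn⟩


lemma compl_f_le (a b : ℕ) (p : Partition') (i : ℕ) : (compl a b p).f i ≤ b := by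
  show (if i < a then b - p.f (a - 1 - i) else 0) ≤ b
  split_ifs <;> omega

lemma rect_f_le (a b i : ℕ) : (rect a b).f i ≤ b := by
  show (if i < a then b else 0) ≤ b
  split_ifs <;> omega

end Partition'

open Partition'

/-- The cells of the skew diagram `λ/ν`: row `i`, columns `ν_i ≤ j < λ_i` (0-indexed). -/
def skewCells (lam nu : Partition') : Set (ℕ × ℕ) :=
  {p | nu.f p.1 ≤ p.2 ∧ p.2 < lam.f p.1}

/-- A Littlewood–Richardson skew tableau of shape `λ/ν` and content `μ`: a filling of the
skew diagram `λ/ν` by positive integers, weakly increasing along rows and strictly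
increasing down columns, in which `k` occurs `μ_k` times, and whose right-to-left,
top-to-bottom reading word has the lattice property (every initial segment of the word
contains at least as many `k`'s as `(k+1)`'s). -/
structure LRTableau (lam nu mu : Partition') where
  entry : ℕ × ℕ → ℕ
  zero_outside : ∀ p, p ∉ skewCells lam nu → entry p = 0
  pos : ∀ p ∈ skewCells lam nu, 0 < entry p
  row_weak : ∀ i j j', (i, j) ∈ skewCells lam nu → (i, j') ∈ skewCells lam nu →
    j ≤ j' → entry (i, j) ≤ entry (i, j')
  col_strict : ∀ i i' j, (i, j) ∈ skewCells lam nu → (i', j) ∈ skewCells lam nu →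
    i < i' → entry (i, j) < entry (i', j)
  content : ∀ k, {p ∈ skewCells lam nu | entry p = k + 1}.ncard = mu.f k
  lattice : ∀ i j k,
    {p ∈ skewCells lam nu | entry p = k + 2 ∧ (p.1 < i ∨ (p.1 = i ∧ j ≤ p.2))}.ncard ≤
    {p ∈ skewCells lam nu | entry p = k + 1 ∧ (p.1 < i ∨ (p.1 = i ∧ j ≤ p.2))}.ncard

/-- The Littlewood–Richardson coefficient `c^λ_{μ,ν}`: the number of Littlewood–Richardson
skew tableaux of shape `λ/ν` and content `μ`; equivalently, the coefficient of the Schur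
function `S_λ` in the product `S_μ · S_ν`. -/
noncomputable def lrCoeff (lam mu nu : Partition') : ℕ := Nat.card (LRTableau lam nu mu)

open Classical in
/-- The coefficient of the Schur function `S_λ` in a product `S_{μ^1} ⋯ S_{μ^r}` of Schur
functions, via iterated Littlewood–Richardson expansion:
`c^λ_{μ̲} = Σ_κ c^κ_{(μ^2,…,μ^r)} · c^λ_{μ^1,κ}`. -/
noncomputable def multiCoeff : List Partition' → Partition' → ℕ
  | [], lam => if lam = Partition'.empty then 1 else 0
  | mu :: rest, lam => ∑' kappa : Partition', multiCoeff rest kappa * lrCoeff lam mu kappa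


/-- If `κ, λ ⊆ □_{a+c,b+d}` with `ℓ(κ) ≤ a`, `λ_1 ≤ b` and `|κ| + |λ| > ad + ab + cb`,
then `σ_κ · σ_λ = 0` in `H*(G(a+c, b+d))`: every Littlewood–Richardson coefficient
`c^ν_{κ,λ}` with `ν` inside the rectangle vanishes. -/
theorem big_product_vanishes (a b c d : ℕ) (kappa lam : Partition')
    (hk : ∀ i, kappa.f i ≤ (Partition'.rect (a + c) (b + d)).f i)
    (hl : ∀ i, lam.f i ≤ (Partition'.rect (a + c) (b + d)).f i)
    (hka : kappa.len ≤ a) (hlb : lam.f 0 ≤ b)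
    (h : a * d + a * b + c * b < kappa.size + lam.size) :
    ∀ nu : Partition', (∀ i, nu.f i ≤ (Partition'.rect (a + c) (b + d)).f i) →
      lrCoeff nu kappa lam = 0 := by
  classical
  intro nu hn
  rw [lrCoeff, Nat.card_eq_zero]
  left
  constructor
  intro T
  -- basic bounds
  have hrect0 : ∀ i, a + c ≤ i → (Partition'.rect (a + c) (b + d)).f i = 0 := by
    intro i hi
    show (if i < a + c then b + d else 0) = 0
    rw [if_neg (by omega)]
  have hν0 : ∀ i, a + c ≤ i → nu.f i = 0 := fun i hi =>
    Nat.le_zero.mp (hrect0 i hi ▸ hn i)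
  have hlz : ∀ i, a + c ≤ i → lam.f i = 0 := fun i hi =>
    Nat.le_zero.mp (hrect0 i hi ▸ hl i)
  have hνle : ∀ i, nu.f i ≤ b + d := fun i => (hn i).trans (Partition'.rect_f_le _ _ _)
  have hlamb : ∀ i, lam.f i ≤ b := fun i => (lam.antitone (Nat.zero_le i)).trans hlb
  have hκ0 : ∀ k, a ≤ k → kappa.f k = 0 := by
    intro k hkk
    have hne : {N | kappa.f N = 0}.Nonempty := by
      obtain ⟨N, hN⟩ := kappa.eventually_zero
      exact ⟨N, hN N le_rfl⟩
    have hmem : kappa.f kappa.len = 0 := Nat.sInf_mem hne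
    have := kappa.antitone (le_trans hka hkk : kappa.len ≤ k)
    omega
  set P : Finset (ℕ × ℕ) := Finset.range (a + c) ×ˢ Finset.range (b + d) with hP
  set F : Finset (ℕ × ℕ) := P.filter (fun p => p ∈ skewCells nu lam) with hF
  have hcellmem : ∀ p, p ∈ skewCells nu lam → p.1 < a + c ∧ p.2 < b + d := by
    intro p hp
    obtain ⟨h1, h2⟩ := hp
    constructor
    · by_contra hc
      push_neg at hc
      rw [hν0 p.1 hc] at h2
      omega
    · exact lt_of_lt_of_le h2 (hνle p.1)
  have hcellF : skewCells nu lam = ↑F := by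
    ext p
    simp only [hF, Finset.coe_filter, Finset.mem_coe, Set.mem_setOf_eq, hP,
      Finset.mem_product, Finset.mem_range]
    exact ⟨fun hp => ⟨hcellmem p hp, hp⟩, fun hp => hp.2⟩
  have hFfin : (skewCells nu lam).Finite := hcellF ▸ F.finite_toSet
  have hent : ∀ p ∈ skewCells nu lam, T.entry p ≤ a := by
    intro p hp
    by_contra hc
    push_neg at hc
    have h0 := T.content (T.entry p - 1)
    rw [hκ0 _ (by omega)] at h0
    have hfin2 : {q ∈ skewCells nu lam | T.entry q = T.entry p - 1 + 1}.Finite :=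
      hFfin.subset (fun q hq => hq.1)
    have hemp := (Set.ncard_eq_zero hfin2).mp h0
    have hpmem : p ∈ {q ∈ skewCells nu lam | T.entry q = T.entry p - 1 + 1} :=
      ⟨hp, by omega⟩
    rw [hemp] at hpmem
    exact hpmem
  -- Step A: card F = |kappa|
  have hFcard : F.card = kappa.size := by
    have h1 : F.card = ∑ v ∈ (Finset.range a).image (· + 1),
        (F.filter (fun p => T.entry p = v)).card := by
      apply Finset.card_eq_sum_card_fiberwise
      intro p hp
      have hpc : p ∈ skewCells nu lam := (Finset.mem_filter.mp hp).2
      have h1 := T.pos p hpc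
      have h2 := hent p hpc
      simp only [Finset.mem_coe, Finset.mem_image, Finset.mem_range]
      exact ⟨T.entry p - 1, by omega, by omega⟩
    rw [h1, Finset.sum_image (by intro x _ y _ hxy; simp only at hxy; omega)]
    have h2 : ∀ k, (F.filter (fun p => T.entry p = k + 1)).card = kappa.f k := by
      intro k
      have hset : {q ∈ skewCells nu lam | T.entry q = k + 1} =
          ↑(F.filter (fun p => T.entry p = k + 1)) := by
        ext q
        constructor
        · rintro ⟨hq1, hq2⟩
          rw [hcellF] at hq1
          exact Finset.mem_coe.mpr (Finset.mem_filter.mpr ⟨Finset.mem_coe.mp hq1, hq2⟩)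
        · intro hq
          obtain ⟨hq1, hq2⟩ := Finset.mem_filter.mp (Finset.mem_coe.mp hq)
          refine ⟨?_, hq2⟩
          rw [hcellF]
          exact Finset.mem_coe.mpr hq1
      have hc := T.content k
      rw [hset, Set.ncard_coe_finset] at hc
      exact hc
    rw [Finset.sum_congr rfl (fun k _ => h2 k)]
    exact (tsum_eq_sum (fun k hk' => hκ0 k (by simpa using hk'))).symm
  -- Step B: card Lc = |lam|
  set Lc : Finset (ℕ × ℕ) := P.filter (fun p => p.2 < lam.f p.1) with hLc
  have hLcard : Lc.card = lam.size := by
    have h1 : Lc.card = ∑ i ∈ Finset.range (a + c),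
        (Lc.filter (fun p => p.1 = i)).card := by
      apply Finset.card_eq_sum_card_fiberwise
      intro p hp
      have := (Finset.mem_product.mp (Finset.mem_filter.mp hp).1).1
      exact this
    have h2 : ∀ i ∈ Finset.range (a + c),
        (Lc.filter (fun p => p.1 = i)).card = lam.f i := by
      intro i hi
      rw [Finset.mem_range] at hi
      have hset : Lc.filter (fun p => p.1 = i) =
          (Finset.range (lam.f i)).image (fun j => (i, j)) := by
        ext p
        simp only [hLc, hP, Finset.mem_filter, Finset.mem_product, Finset.mem_range,
          Finset.mem_image]
        constructor
        · rintro ⟨⟨⟨hi', hj'⟩, h3⟩, h4⟩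
          subst h4
          exact ⟨p.2, h3, rfl⟩
        · rintro ⟨j, hj, rfl⟩
          have hb1 : lam.f i ≤ b := hlamb i
          exact ⟨⟨⟨hi, by omega⟩, by simpa using hj⟩, rfl⟩
      rw [hset, Finset.card_image_of_injective _ (fun x y hxy => by
        simpa using (Prod.mk.injEq i x i y ▸ hxy : (i, x) = (i, y))), Finset.card_range]
    rw [h1, Finset.sum_congr rfl h2]
    exact (tsum_eq_sum (fun i hi => hlz i (by simpa using hi))).symm
  -- Step C: S = Lc ∪ F disjointly
  set S : Finset (ℕ × ℕ) :=
    P.filter (fun p => p.2 < lam.f p.1 ∨ p ∈ skewCells nu lam) with hS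
  have hSunion : S = Lc ∪ F := by rw [hS, hLc, hF, Finset.filter_or]
  have hdisj : Disjoint Lc F := by
    rw [Finset.disjoint_left]
    intro p hp1 hp2
    have h1 : p.2 < lam.f p.1 := (Finset.mem_filter.mp hp1).2
    have h2 : lam.f p.1 ≤ p.2 := ((Finset.mem_filter.mp hp2).2).1
    omega
  have hScard : S.card = lam.size + kappa.size := by
    rw [hSunion, Finset.card_union_of_disjoint hdisj, hLcard, hFcard]
  -- Step D: column bounds
  have hcol : S.card = ∑ j ∈ Finset.range (b + d), (S.filter (fun p => p.2 = j)).card := by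
    apply Finset.card_eq_sum_card_fiberwise
    intro p hp
    exact (Finset.mem_product.mp (Finset.mem_filter.mp hp).1).2
  have hb1 : ∀ j, (S.filter (fun p => p.2 = j)).card ≤ a + c := by
    intro j
    have hsub : S.filter (fun p => p.2 = j) ⊆ (Finset.range (a + c)).image (fun i => (i, j)) := by
      intro p hp
      obtain ⟨hpS, hpj⟩ := Finset.mem_filter.mp hp
      have h1 := (Finset.mem_product.mp (Finset.mem_filter.mp hpS).1).1
      simp only [Finset.mem_image, Finset.mem_range]
      exact ⟨p.1, by simpa using h1, by rw [← hpj]⟩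
    calc (S.filter (fun p => p.2 = j)).card
        ≤ ((Finset.range (a + c)).image (fun i => (i, j))).card := Finset.card_le_card hsub
      _ ≤ a + c := le_trans Finset.card_image_le (by simp)
  have hb2 : ∀ j, b ≤ j → (S.filter (fun p => p.2 = j)).card ≤ a := by
    intro j hj
    have hsub : ∀ p ∈ S.filter (fun p => p.2 = j), p ∈ skewCells nu lam := by
      intro p hp
      obtain ⟨hpS, hpj⟩ := Finset.mem_filter.mp hp
      rcases (Finset.mem_filter.mp hpS).2 with hcl | hc
      · exact absurd hcl (by have := hlamb p.1; omega)
      · exact hc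
    have hmaps : ∀ p ∈ S.filter (fun p => p.2 = j), T.entry p ∈ Finset.Icc 1 a := by
      intro p hp
      have hpc := hsub p hp
      have h1 := T.pos p hpc
      have h2 := hent p hpc
      simp only [Finset.mem_Icc]
      omega
    have hinj : Set.InjOn T.entry ↑(S.filter (fun p => p.2 = j)) := by
      intro p hp q hq hpq
      rw [Finset.mem_coe] at hp hq
      have hpc := hsub p hp
      have hqc := hsub q hq
      have hpj : p.2 = j := (Finset.mem_filter.mp hp).2
      have hqj : q.2 = j := (Finset.mem_filter.mp hq).2
      have hpe : p = (p.1, j) := Prod.ext rfl hpj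
      have hqe : q = (q.1, j) := Prod.ext rfl hqj
      by_contra hne
      have hfst : p.1 ≠ q.1 := fun hf => hne (Prod.ext hf (hpj.trans hqj.symm))
      rcases Nat.lt_or_ge p.1 q.1 with hlt | hge
      · have := T.col_strict p.1 q.1 j (hpe ▸ hpc) (hqe ▸ hqc) hlt
        rw [← hpe, ← hqe, hpq] at this
        omega
      · have hlt' : q.1 < p.1 := by omega
        have := T.col_strict q.1 p.1 j (hqe ▸ hqc) (hpe ▸ hpc) hlt'
        rw [← hpe, ← hqe, hpq] at this
        omega
    calc (S.filter (fun p => p.2 = j)).card ≤ (Finset.Icc 1 a).card :=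
        Finset.card_le_card_of_injOn T.entry hmaps hinj
      _ = a := by rw [Nat.card_Icc]; omega
  have hsum : ∑ j ∈ Finset.range (b + d), (S.filter (fun p => p.2 = j)).card
      ≤ b * (a + c) + d * a := by
    rw [Finset.range_eq_Ico,
      ← Finset.sum_Ico_consecutive _ (Nat.zero_le b) (Nat.le_add_right b d)]
    apply Nat.add_le_add
    · calc ∑ j ∈ Finset.Ico 0 b, (S.filter (fun p => p.2 = j)).card
          ≤ ∑ _j ∈ Finset.Ico 0 b, (a + c) := Finset.sum_le_sum (fun j _ => hb1 j)
        _ = b * (a + c) := by simp [Finset.sum_const, Nat.card_Ico, Nat.mul_comm]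
    · calc ∑ j ∈ Finset.Ico b (b + d), (S.filter (fun p => p.2 = j)).card
          ≤ ∑ _j ∈ Finset.Ico b (b + d), a :=
            Finset.sum_le_sum (fun j hj => hb2 j (Finset.mem_Ico.mp hj).1)
        _ = d * a := by simp [Finset.sum_const, Nat.card_Ico, Nat.mul_comm]
  have hfinal : lam.size + kappa.size ≤ b * (a + c) + d * a := by
    rw [← hScard]
    rw [hcol]
    exact hsum
  have heq : b * (a + c) + d * a = a * d + a * b + c * b := by ring
  omega
end

section
/- Let ρ, τ ⊆ □_{a+c,b+d} be partitions with (ρ_1+⋯+ρ_a) + (τ'_1+⋯+τ'_b) > ad + cb + ab, where τ' is the conjugate of τ. Then σ_ρ · σ_τ = 0 in the cohomology ring of the Grassmannian G(a+c, b+d). -/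
open Partition'

section AuxVanish

open Partition'

lemma skewCells_finite (lam nu : Partition') : (skewCells lam nu).Finite := by
  obtain ⟨N, hN⟩ := lam.eventually_zero
  refine ((Set.finite_Iio N).prod (Set.finite_Iio (lam.f 0))).subset ?_
  rintro ⟨r, c⟩ ⟨h1, h2⟩
  constructor
  · show r < N
    by_contra hr
    push_neg at hr
    rw [hN r hr] at h2
    omega
  · exact lt_of_lt_of_le h2 (lam.antitone (Nat.zero_le r))

lemma sep_skew_finite (lam nu : Partition') (P : ℕ × ℕ → Prop) :
    {p ∈ skewCells lam nu | P p}.Finite :=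
  (skewCells_finite lam nu).subset fun _ hp => hp.1

lemma lattice_step {lam nu mu : Partition'} (T : LRTableau lam nu mu) (k r : ℕ) :
    {p ∈ skewCells lam nu | T.entry p = k + 2 ∧ p.1 < r + 1}.ncard ≤
    {p ∈ skewCells lam nu | T.entry p = k + 1 ∧ p.1 < r}.ncard := by
  by_cases hex : ∃ j, (r, j) ∈ skewCells lam nu ∧ T.entry (r, j) = k + 2
  · set j0 := sInf {j | (r, j) ∈ skewCells lam nu ∧ T.entry (r, j) = k + 2} with hj0
    have hmem : (r, j0) ∈ skewCells lam nu ∧ T.entry (r, j0) = k + 2 := Nat.sInf_mem hex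
    have h1 : {p ∈ skewCells lam nu | T.entry p = k + 2 ∧ p.1 < r + 1} ⊆
        {p ∈ skewCells lam nu | T.entry p = k + 2 ∧ (p.1 < r ∨ (p.1 = r ∧ j0 ≤ p.2))} := by
      rintro ⟨pr, pc⟩ ⟨hs, he, hlt⟩
      refine ⟨hs, he, ?_⟩
      rcases Nat.lt_or_ge pr r with hlt' | hge
      · exact Or.inl hlt'
      · have hpr : pr = r := by omega
        subst hpr
        exact Or.inr ⟨rfl, Nat.sInf_le ⟨hs, he⟩⟩
    have h2 : {p ∈ skewCells lam nu | T.entry p = k + 1 ∧ (p.1 < r ∨ (p.1 = r ∧ j0 ≤ p.2))} ⊆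
        {p ∈ skewCells lam nu | T.entry p = k + 1 ∧ p.1 < r} := by
      rintro ⟨pr, pc⟩ ⟨hs, he, hreg⟩
      refine ⟨hs, he, ?_⟩
      rcases hreg with hlt' | ⟨hpr, hj⟩
      · exact hlt'
      · exfalso
        subst hpr
        have := T.row_weak pr j0 pc hmem.1 hs hj
        rw [hmem.2, he] at this
        omega
    calc {p ∈ skewCells lam nu | T.entry p = k + 2 ∧ p.1 < r + 1}.ncard
        ≤ {p ∈ skewCells lam nu |
            T.entry p = k + 2 ∧ (p.1 < r ∨ (p.1 = r ∧ j0 ≤ p.2))}.ncard :=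
          Set.ncard_le_ncard h1 (sep_skew_finite lam nu _)
      _ ≤ {p ∈ skewCells lam nu |
            T.entry p = k + 1 ∧ (p.1 < r ∨ (p.1 = r ∧ j0 ≤ p.2))}.ncard := T.lattice r j0 k
      _ ≤ {p ∈ skewCells lam nu | T.entry p = k + 1 ∧ p.1 < r}.ncard :=
          Set.ncard_le_ncard h2 (sep_skew_finite lam nu _)
  · have h1 : {p ∈ skewCells lam nu | T.entry p = k + 2 ∧ p.1 < r + 1} ⊆
        {p ∈ skewCells lam nu | T.entry p = k + 2 ∧ (p.1 < r ∨ (p.1 = r ∧ lam.f r ≤ p.2))} := by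
      rintro ⟨pr, pc⟩ ⟨hs, he, hlt⟩
      refine ⟨hs, he, ?_⟩
      rcases Nat.lt_or_ge pr r with hlt' | hge
      · exact Or.inl hlt'
      · have hpr : pr = r := by omega
        subst hpr
        exact absurd ⟨pc, hs, he⟩ hex
    have h2 : {p ∈ skewCells lam nu | T.entry p = k + 1 ∧ (p.1 < r ∨ (p.1 = r ∧ lam.f r ≤ p.2))} ⊆
        {p ∈ skewCells lam nu | T.entry p = k + 1 ∧ p.1 < r} := by
      rintro ⟨pr, pc⟩ ⟨hs, he, hreg⟩
      refine ⟨hs, he, ?_⟩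
      rcases hreg with hlt' | ⟨hpr, hj⟩
      · exact hlt'
      · exfalso
        subst hpr
        exact absurd hs.2 (by omega)
    calc {p ∈ skewCells lam nu | T.entry p = k + 2 ∧ p.1 < r + 1}.ncard
        ≤ {p ∈ skewCells lam nu |
            T.entry p = k + 2 ∧ (p.1 < r ∨ (p.1 = r ∧ lam.f r ≤ p.2))}.ncard :=
          Set.ncard_le_ncard h1 (sep_skew_finite lam nu _)
      _ ≤ {p ∈ skewCells lam nu |
            T.entry p = k + 1 ∧ (p.1 < r ∨ (p.1 = r ∧ lam.f r ≤ p.2))}.ncard :=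
          T.lattice r (lam.f r) k
      _ ≤ {p ∈ skewCells lam nu | T.entry p = k + 1 ∧ p.1 < r}.ncard :=
          Set.ncard_le_ncard h2 (sep_skew_finite lam nu _)

lemma lattice_chain {lam nu mu : Partition'} (T : LRTableau lam nu mu) (t r : ℕ) :
    {p ∈ skewCells lam nu | T.entry p = t + 1 ∧ p.1 < r + t}.ncard ≤
    {p ∈ skewCells lam nu | T.entry p = 1 ∧ p.1 < r}.ncard := by
  induction t with
  | zero => exact le_rfl
  | succ n ih => exact le_trans (lattice_step T n (r + n)) ih

/-- Key bound: if an LR tableau of shape `lam/sh` and content `ct` exists with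
`lam ⊆ □_{m,n}`, then `ct_{m-1-i} + sh_i ≤ n` for all `i < m`. -/
lemma key_bound (m n : ℕ) (sh ct lam : Partition')
    (hshn : ∀ i, sh.f i ≤ n)
    (hlam : ∀ i, lam.f i ≤ (Partition'.rect m n).f i)
    (T : LRTableau lam sh ct) (i : ℕ) (hi : i < m) :
    ct.f (m - 1 - i) + sh.f i ≤ n := by
  set k := m - 1 - i with hk
  have hrowlt : ∀ p : ℕ × ℕ, p ∈ skewCells lam sh → p.1 < m := by
    intro p hp
    by_contra hm
    push_neg at hm
    have h0 : lam.f p.1 ≤ 0 := by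
      have := hlam p.1
      simpa [Partition'.rect, Nat.not_lt_of_le hm] using this
    have := hp.2
    omega
  have hset : {p ∈ skewCells lam sh | T.entry p = k + 1} =
      {p ∈ skewCells lam sh | T.entry p = k + 1 ∧ p.1 < (i + 1) + k} := by
    ext p
    constructor
    · rintro ⟨hs, he⟩
      exact ⟨hs, he, lt_of_lt_of_le (hrowlt p hs) (by omega)⟩
    · rintro ⟨hs, he, _⟩
      exact ⟨hs, he⟩
  have hchain := lattice_chain T k (i + 1)
  have h1 : ct.f k ≤ {p ∈ skewCells lam sh | T.entry p = 1 ∧ p.1 < i + 1}.ncard := by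
    rw [← T.content k, hset]
    exact hchain
  set N1 := {p ∈ skewCells lam sh | T.entry p = 1 ∧ p.1 < i + 1} with hN1
  have hinj : Set.InjOn Prod.snd N1 := by
    rintro ⟨pr, pc⟩ hp ⟨qr, qc⟩ hq hpq
    have hpq' : pc = qc := hpq
    subst hpq'
    rcases lt_trichotomy pr qr with hlt | heq | hgt
    · have := T.col_strict pr qr pc hp.1 hq.1 hlt
      rw [hp.2.1, hq.2.1] at this
      omega
    · rw [heq]
    · have := T.col_strict qr pr pc hq.1 hp.1 hgt
      rw [hp.2.1, hq.2.1] at this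
      omega
  have himg : Prod.snd '' N1 ⊆ Set.Ico (sh.f i) n := by
    rintro c ⟨⟨pr, pc⟩, hp, rfl⟩
    constructor
    · exact le_trans (sh.antitone (Nat.lt_succ_iff.mp hp.2.2)) hp.1.1
    · exact lt_of_lt_of_le hp.1.2
        (le_trans (hlam pr) (Partition'.rect_f_le m n pr))
  have h2 : N1.ncard ≤ n - sh.f i := by
    have e1 : N1.ncard = (Prod.snd '' N1).ncard :=
      (Set.ncard_image_of_injOn hinj).symm
    have e2 : (Prod.snd '' N1).ncard ≤ (Set.Ico (sh.f i) n).ncard :=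
      Set.ncard_le_ncard himg (Set.finite_Ico _ _)
    have e3 : (Set.Ico (sh.f i) n).ncard = n - sh.f i := by
      rw [← Finset.coe_Ico, Set.ncard_coe_finset, Nat.card_Ico]
    omega
  have := hshn i
  omega

lemma conj_psum_eq (tau : Partition') (m b : ℕ) (hm : ∀ i, m ≤ i → tau.f i = 0) :
    tau.conj.psum b = ∑ i ∈ Finset.range m, min (tau.f i) b := by
  have hcf : ∀ j, tau.conj.f j = ((Finset.range m).filter (fun i => j + 1 ≤ tau.f i)).card := by
    intro j
    show {i | j + 1 ≤ tau.f i}.ncard = _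
    rw [← Set.ncard_coe_finset]
    congr 1
    ext i
    simp only [Finset.coe_filter, Finset.mem_range, Set.mem_setOf_eq]
    constructor
    · intro hi
      refine ⟨?_, hi⟩
      by_contra hlt
      push_neg at hlt
      rw [hm i hlt] at hi
      omega
    · exact fun h => h.2
  show ∑ j ∈ Finset.range b, tau.conj.f j = _
  calc ∑ j ∈ Finset.range b, tau.conj.f j
      = ∑ j ∈ Finset.range b, ∑ i ∈ Finset.range m, if j + 1 ≤ tau.f i then 1 else 0 := by
        refine Finset.sum_congr rfl fun j _ => ?_
        rw [hcf j, Finset.card_filter]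
    _ = ∑ i ∈ Finset.range m, ∑ j ∈ Finset.range b, if j + 1 ≤ tau.f i then 1 else 0 :=
        Finset.sum_comm
    _ = ∑ i ∈ Finset.range m, min (tau.f i) b := by
        refine Finset.sum_congr rfl fun i _ => ?_
        rw [← Finset.card_filter]
        have : (Finset.range b).filter (fun j => j + 1 ≤ tau.f i) =
            Finset.range (min (tau.f i) b) := by
          ext j
          simp only [Finset.mem_filter, Finset.mem_range]
          omega
        rw [this, Finset.card_range]

end AuxVanish

/-- If `ρ, τ ⊆ □_{a+c,b+d}` with `(ρ_1+⋯+ρ_a) + (τ'_1+⋯+τ'_b) > ad + cb + ab`, then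
`σ_ρ · σ_τ = 0` in `H*(G(a+c, b+d))`. -/
theorem psum_product_vanishes (a b c d : ℕ) (rho tau : Partition')
    (hr : ∀ i, rho.f i ≤ (Partition'.rect (a + c) (b + d)).f i)
    (ht : ∀ i, tau.f i ≤ (Partition'.rect (a + c) (b + d)).f i)
    (h : a * d + c * b + a * b < rho.psum a + tau.conj.psum b) :
    ∀ nu : Partition', (∀ i, nu.f i ≤ (Partition'.rect (a + c) (b + d)).f i) →
      lrCoeff nu rho tau = 0 := by
  intro nu hnu
  rw [lrCoeff]
  by_contra hne
  obtain ⟨⟨T⟩, -⟩ := Nat.card_ne_zero.mp hne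
  -- basic bounds
  have htn : ∀ i, tau.f i ≤ b + d := fun i =>
    le_trans (ht i) (Partition'.rect_f_le _ _ i)
  have ht0 : ∀ i, a + c ≤ i → tau.f i = 0 := by
    intro i hi
    have := ht i
    simpa [Partition'.rect, Nat.not_lt_of_le hi, Nat.le_zero] using this
  -- the classical row bounds from the LR tableau (shape nu/tau, content rho)
  have hrow : ∀ j, j < a → rho.f j + tau.f (a + c - 1 - j) ≤ b + d := by
    intro j hj
    have hi : a + c - 1 - j < a + c := by omega
    have hkb := key_bound (a + c) (b + d) tau rho nu htn hnu T (a + c - 1 - j) hi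
    have heq : a + c - 1 - (a + c - 1 - j) = j := by omega
    rw [heq] at hkb
    omega
  -- conjugate partial sum as a sum of mins
  have hconj := conj_psum_eq tau (a + c) b ht0
  -- split and bound the sum of mins
  have hsplit : ∑ i ∈ Finset.range (a + c), min (tau.f i) b =
      ∑ i ∈ Finset.range c, min (tau.f i) b + ∑ i ∈ Finset.Ico c (a + c), min (tau.f i) b := by
    rw [Finset.range_eq_Ico,
      ← Finset.sum_Ico_consecutive (fun i => min (tau.f i) b) (Nat.zero_le c)
        (by omega : c ≤ a + c), ← Finset.range_eq_Ico]
  have hb1 : ∑ i ∈ Finset.range c, min (tau.f i) b ≤ c * b := by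
    calc ∑ i ∈ Finset.range c, min (tau.f i) b ≤ ∑ _i ∈ Finset.range c, b :=
          Finset.sum_le_sum fun i _ => min_le_right _ _
      _ = c * b := by rw [Finset.sum_const, Finset.card_range, smul_eq_mul]
  have hb2 : ∑ i ∈ Finset.Ico c (a + c), min (tau.f i) b ≤
      ∑ j ∈ Finset.range a, tau.f (a + c - 1 - j) := by
    have e1 : ∑ i ∈ Finset.Ico c (a + c), min (tau.f i) b ≤
        ∑ i ∈ Finset.Ico c (a + c), tau.f i :=
      Finset.sum_le_sum fun i _ => min_le_left _ _
    have e2 : ∑ i ∈ Finset.Ico c (a + c), tau.f i =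
        ∑ j ∈ Finset.range (a + c - c), tau.f (c + j) := Finset.sum_Ico_eq_sum_range _ c (a + c)
    have e3 : a + c - c = a := by omega
    have e4 : ∑ j ∈ Finset.range a, tau.f (a + c - 1 - j) =
        ∑ j ∈ Finset.range a, tau.f (c + j) := by
      rw [← Finset.sum_range_reflect (fun j => tau.f (c + j)) a]
      refine Finset.sum_congr rfl fun j hj => ?_
      have hj' : j < a := Finset.mem_range.mp hj
      congr 1
      omega
    rw [e4]
    rw [e3] at e2
    omega
  -- sum the row bounds
  have hb3 : rho.psum a + ∑ j ∈ Finset.range a, tau.f (a + c - 1 - j) ≤ a * (b + d) := by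
    have : ∑ j ∈ Finset.range a, (rho.f j + tau.f (a + c - 1 - j)) ≤
        ∑ _j ∈ Finset.range a, (b + d) :=
      Finset.sum_le_sum fun j hj => hrow j (Finset.mem_range.mp hj)
    rw [Finset.sum_add_distrib, Finset.sum_const, Finset.card_range, smul_eq_mul] at this
    exact this
  have hfinal : rho.psum a + tau.conj.psum b ≤ a * d + c * b + a * b := by
    rw [hconj, hsplit]
    have := Nat.mul_add a b d
    omega
  omega
end
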